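/- If 0 < c < c* (so that μ = 1/(1−cM) > 0), then E₂ = ((λ+μ)/(μλ)) · ∫₁^X f(z;μ,λ,−3/2) dz; and if c > c* (so that μ̃ = 1/(cM−1) > 0), then E₂ = ((λ+μ̃)/(λμ̃)) · exp(−2λ/μ̃) · ∫₁^X f(z;μ̃,λ,−3/2) dz. -/

import Mathlib

open MeasureTheory Real

/-- P.d.f. of the normal distribution with mean `m` and variance `s2`. -/
noncomputable def normalPdf (m s2 x : ℝ) : ℝ :=
  (Real.sqrt (2 * Real.pi * s2))⁻¹ * Real.exp (-(x - m) ^ 2 / (2 * s2))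

/-- The elementary component
`E_k = ∫₀^{c(t−v)/(u+cv)} (1+x)^{−k} φ_{cM(1+x), c²D²(1+x)/(u+cv)}(x) dx`. -/
noncomputable def elemComp (u c v t M D : ℝ) (k : ℕ) : ℝ :=
  ∫ x in (0:ℝ)..(c * (t - v) / (u + c * v)),
    ((1 + x) ^ k)⁻¹ *
      normalPdf (c * M * (1 + x)) (c ^ 2 * D ^ 2 * (1 + x) / (u + c * v)) x

/-- The exponential factor `E(z; μ, λ) = exp(−λ(z−μ)²/(2μ²z))`. -/
noncomputable def gigE (z μ lam : ℝ) : ℝ :=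
  Real.exp (-(lam * (z - μ) ^ 2) / (2 * μ ^ 2 * z))

/-- Generalized inverse Gaussian density with `p = 1/2`. -/
noncomputable def gigPdfHalf (μ lam z : ℝ) : ℝ :=
  Real.sqrt lam / (μ * Real.sqrt (2 * Real.pi)) * z ^ (-(1:ℝ)/2) * gigE z μ lam

/-- Generalized inverse Gaussian density with `p = −1/2`. -/
noncomputable def gigPdfNegHalf (μ lam z : ℝ) : ℝ :=
  Real.sqrt lam / Real.sqrt (2 * Real.pi) * z ^ (-(3:ℝ)/2) * gigE z μ lam

/-- Generalized inverse Gaussian density with `p = −3/2`. -/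
noncomputable def gigPdfNeg3Half (μ lam z : ℝ) : ℝ :=
  lam ^ ((3:ℝ)/2) * μ / (Real.sqrt (2 * Real.pi) * (lam + μ)) * z ^ (-(5:ℝ)/2) * gigE z μ lam

/-- Generalized inverse Gaussian density with `p = −5/2`. -/
noncomputable def gigPdfNeg5Half (μ lam z : ℝ) : ℝ :=
  lam ^ ((5:ℝ)/2) * μ ^ 2 / (Real.sqrt (2 * Real.pi) * (lam ^ 2 + 3 * lam * μ + 3 * μ ^ 2))
    * z ^ (-(7:ℝ)/2) * gigE z μ lam

/-!
Substitute `z = 1 + x`. Whenever `μ (1 − cM) = 1`, the Gaussian exponent `−λ (x − cMz)² / (2z)`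
equals `−λ (z − μ)² / (2μ²z)`, so the integrand of `E₂` is
`z⁻¹ f(z; μ, λ, −1/2) = ((λ + μ)/(μλ)) f(z; μ, λ, −3/2)`.
For `cM > 1` this `μ` is `−μ̃ < 0`, and `E(z; −μ̃, λ) = e^{−2λ/μ̃} E(z; μ̃, λ)` returns to a density
with positive mean `μ̃`.
-/

theorem gigE_neg (z μ lam : ℝ) (hz : z ≠ 0) (hμ : μ ≠ 0) :
    gigE z (-μ) lam = Real.exp (-2 * lam / μ) * gigE z μ lam := by
  rw [gigE, gigE, ← Real.exp_add]
  congr 1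
  field_simp
  ring

theorem gigPdfNegHalf_neg (z μ lam : ℝ) (hz : z ≠ 0) (hμ : μ ≠ 0) :
    gigPdfNegHalf (-μ) lam z = Real.exp (-2 * lam / μ) * gigPdfNegHalf μ lam z := by
  rw [gigPdfNegHalf, gigPdfNegHalf, gigE_neg z μ lam hz hμ]
  ring

theorem normalPdf_eq_mul_gigPdfNegHalf {a μ lam z : ℝ} (hlam : 0 < lam) (hz : 0 < z)
    (hμ : μ * (1 - a) = 1) :
    normalPdf (a * z) (z / lam) (z - 1) = z * gigPdfNegHalf μ lam z := by
  have hμ0 : μ ≠ 0 := left_ne_zero_of_mul_eq_one hμ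
  have hexp :
      -(z - 1 - a * z) ^ 2 / (2 * (z / lam)) = -(lam * (z - μ) ^ 2) / (2 * μ ^ 2 * z) := by
    have hshift : z - 1 - a * z = (z - μ) / μ := by
      field_simp
      linear_combination z * hμ
    rw [hshift]
    field_simp
  have hpow : z ^ (-(3:ℝ)/2) = (z * Real.sqrt z)⁻¹ := by
    rw [Real.sqrt_eq_rpow, ← Real.rpow_one_add' hz.le (by norm_num), ← Real.rpow_neg hz.le]
    norm_num
  have hsqrt : Real.sqrt (2 * Real.pi * (z / lam))
      = Real.sqrt (2 * Real.pi) * Real.sqrt z / Real.sqrt lam := by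
    rw [Real.sqrt_mul (by positivity), Real.sqrt_div hz.le, mul_div_assoc]
  rw [normalPdf, gigPdfNegHalf, gigE, hexp, hpow, hsqrt]
  field_simp

theorem inv_mul_gigPdfNegHalf {μ lam z : ℝ} (hlam : 0 < lam) (hμ : 0 < μ) (hz : 0 < z) :
    z⁻¹ * gigPdfNegHalf μ lam z = (lam + μ) / (μ * lam) * gigPdfNeg3Half μ lam z := by
  have hpow : z ^ (-(5:ℝ)/2) = z⁻¹ * z ^ (-(3:ℝ)/2) := by
    rw [← Real.rpow_neg_one, ← Real.rpow_add hz]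
    norm_num
  have hlam32 : lam ^ ((3:ℝ)/2) = lam * Real.sqrt lam := by
    rw [Real.sqrt_eq_rpow, ← Real.rpow_one_add' hlam.le (by norm_num)]
    norm_num
  rw [gigPdfNegHalf, gigPdfNeg3Half, hpow, hlam32]
  field_simp

theorem elemComp_eq_integral (u c v t M D : ℝ) (k : ℕ) :
    elemComp u c v t M D k
      = ∫ z in (1:ℝ)..(c * (t - v) / (u + c * v) + 1),
          (z ^ k)⁻¹ * normalPdf (c * M * z) (z / ((u + c * v) / (c ^ 2 * D ^ 2))) (z - 1) := by
  set f : ℝ → ℝ := fun z ↦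
    (z ^ k)⁻¹ * normalPdf (c * M * z) (z / ((u + c * v) / (c ^ 2 * D ^ 2))) (z - 1)
  calc elemComp u c v t M D k = ∫ x in (0:ℝ)..(c * (t - v) / (u + c * v)), f (x + 1) := by
        rw [elemComp]
        congr 1 with x
        simp only [f, add_sub_cancel_left, div_div_eq_mul_div, add_comm x, mul_comm (1 + x)]
    _ = ∫ z in (0 + 1 : ℝ)..(c * (t - v) / (u + c * v) + 1), f z :=
        intervalIntegral.integral_comp_add_right f 1
    _ = _ := by rw [zero_add]

section

variable {a μ lam X : ℝ}

theorem integral_inv_sq_mul_normalPdf_of_mul_one_sub (hlam : 0 < lam) (hμ : 0 < μ)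
    (haμ : μ * (1 - a) = 1) (hX : 0 < X) :
    ∫ z in (1:ℝ)..X, (z ^ 2)⁻¹ * normalPdf (a * z) (z / lam) (z - 1)
      = (lam + μ) / (μ * lam) * ∫ z in (1:ℝ)..X, gigPdfNeg3Half μ lam z := by
  rw [← intervalIntegral.integral_const_mul]
  refine intervalIntegral.integral_congr fun z hz => ?_
  have hz : 0 < z := lt_of_lt_of_le (lt_min one_pos hX) hz.1
  rw [normalPdf_eq_mul_gigPdfNegHalf hlam hz haμ, ← inv_mul_gigPdfNegHalf hlam hμ hz]
  field_simp

theorem integral_inv_sq_mul_normalPdf_of_mul_sub_one (hlam : 0 < lam) (hμ : 0 < μ)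
    (haμ : μ * (a - 1) = 1) (hX : 0 < X) :
    ∫ z in (1:ℝ)..X, (z ^ 2)⁻¹ * normalPdf (a * z) (z / lam) (z - 1)
      = (lam + μ) / (lam * μ) * Real.exp (-2 * lam / μ) *
          ∫ z in (1:ℝ)..X, gigPdfNeg3Half μ lam z := by
  rw [← intervalIntegral.integral_const_mul]
  refine intervalIntegral.integral_congr fun z hz => ?_
  have hz : 0 < z := lt_of_lt_of_le (lt_min one_pos hX) hz.1
  have haμ' : -μ * (1 - a) = 1 := by linear_combination haμ
  rw [normalPdf_eq_mul_gigPdfNegHalf hlam hz haμ', gigPdfNegHalf_neg z μ lam hz.ne' hμ.ne',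
    mul_comm lam μ, mul_right_comm _ (Real.exp _), ← inv_mul_gigPdfNegHalf hlam hμ hz]
  field_simp

end

/-- Theorem on `E₂` in terms of the generalized inverse Gaussian c.d.f. with `p = −3/2`. -/
theorem elemComp_two_eq (u c v t M D : ℝ)
    (hu : 0 < u) (hc : 0 < c) (hv : 0 ≤ v) (ht : v < t) (hM : 0 < M) (hD : 0 < D) :
    (c < 1 / M →
      elemComp u c v t M D 2
        = (((u + c * v) / (c ^ 2 * D ^ 2)) + (1 / (1 - c * M)))
              / ((1 / (1 - c * M)) * ((u + c * v) / (c ^ 2 * D ^ 2))) *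
            ∫ z in (1:ℝ)..(c * (t - v) / (u + c * v) + 1),
              gigPdfNeg3Half (1 / (1 - c * M)) ((u + c * v) / (c ^ 2 * D ^ 2)) z)
    ∧ (1 / M < c →
      elemComp u c v t M D 2
        = (((u + c * v) / (c ^ 2 * D ^ 2)) + (1 / (c * M - 1)))
              / (((u + c * v) / (c ^ 2 * D ^ 2)) * (1 / (c * M - 1))) *
            Real.exp (-2 * ((u + c * v) / (c ^ 2 * D ^ 2)) / (1 / (c * M - 1))) *
            ∫ z in (1:ℝ)..(c * (t - v) / (u + c * v) + 1),
              gigPdfNeg3Half (1 / (c * M - 1)) ((u + c * v) / (c ^ 2 * D ^ 2)) z) := by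
  have hlam : 0 < (u + c * v) / (c ^ 2 * D ^ 2) := by positivity
  have hX : 0 < c * (t - v) / (u + c * v) + 1 := by
    have : 0 < t - v := sub_pos.mpr ht
    positivity
  rw [elemComp_eq_integral]
  constructor
  · intro hcM
    have hcM : 0 < 1 - c * M := by rw [lt_div_iff₀ hM] at hcM; linarith
    exact integral_inv_sq_mul_normalPdf_of_mul_one_sub hlam (by positivity)
      (one_div_mul_cancel hcM.ne') hX
  · intro hcM
    have hcM : 0 < c * M - 1 := by rw [div_lt_iff₀ hM] at hcM; linarith
    exact integral_inv_sq_mul_normalPdf_of_mul_sub_one hlam (by positivity)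
      (one_div_mul_cancel hcM.ne') hX
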